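/- arXiv:math/0605264 — 2 statements merged into one kernel-verified Lean document; each statement's English description precedes it below -/
import Mathlib

section
/- Let n ≥ 1 and N ≥ 0 be integers, and let r = N − n·⌊N/n⌋ be the remainder of N upon division by n. For every function c : Fin n → ℕ with ∑_i c(i) = N, the number of edges of the complete multipartite graph with part sizes c, namely ∑_{i<j} c(i)·c(j), is at most the number of edges of the complete multipartite graph on N vertices in which r parts have ⌊N/n⌋ + 1 vertices and n − r parts have ⌊N/n⌋ vertices; that is, ∑_{i<j} c(i)·c(j) ≤ (1/2)·(N² − r·(⌊N/n⌋+1)² − (n−r)·⌊N/n⌋²). In other words, among complete multipartite graphs on N vertices with at most n partite sets, the number of edges is maximized when the vertices are distributed as evenly as possible among n partite sets. -/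
open Finset

lemma sq_sum_split (n : ℕ) (f : Fin n → ℚ) :
    (∑ i, f i)^2 = (∑ i, (f i)^2)
      + 2 * ∑ ij ∈ Finset.univ.filter (fun ij : Fin n × Fin n => ij.1 < ij.2),
          f ij.1 * f ij.2 := by
  have h1 : (∑ i, f i)^2 = ∑ ij ∈ (univ ×ˢ univ : Finset (Fin n × Fin n)), f ij.1 * f ij.2 := by
    rw [sq, Finset.sum_mul_sum, Finset.sum_product]
  rw [h1]
  have h2 : (univ ×ˢ univ : Finset (Fin n × Fin n)) = univ := by
    ext ⟨a, b⟩; simp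
  rw [h2]
  rw [← Finset.sum_filter_add_sum_filter_not univ (fun ij : Fin n × Fin n => ij.1 = ij.2)
    (fun ij => f ij.1 * f ij.2)]
  have hd : ∑ ij ∈ univ.filter (fun ij : Fin n × Fin n => ij.1 = ij.2), f ij.1 * f ij.2
      = ∑ i, (f i)^2 := by
    rw [Finset.sum_filter, Fintype.sum_prod_type]
    simp [Finset.sum_ite_eq', sq]
  rw [hd]
  have hsplit : univ.filter (fun ij : Fin n × Fin n => ¬ ij.1 = ij.2)
      = univ.filter (fun ij : Fin n × Fin n => ij.1 < ij.2)
        ∪ univ.filter (fun ij : Fin n × Fin n => ij.2 < ij.1) := by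
    ext ⟨a, b⟩
    simp only [mem_filter, mem_union, mem_univ, true_and]
    constructor
    · intro h; rcases lt_or_gt_of_ne h with h' | h' <;> [left; right] <;> simpa using h'
    · rintro (h | h) <;> omega
  rw [hsplit, Finset.sum_union]
  · have hswap : ∑ ij ∈ univ.filter (fun ij : Fin n × Fin n => ij.2 < ij.1), f ij.1 * f ij.2
        = ∑ ij ∈ univ.filter (fun ij : Fin n × Fin n => ij.1 < ij.2), f ij.1 * f ij.2 := by
      apply Finset.sum_nbij' (fun ij => (ij.2, ij.1)) (fun ij => (ij.2, ij.1)) <;>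
        simp [mul_comm]
    rw [hswap]; ring
  · rw [Finset.disjoint_filter]
    intro ⟨a, b⟩ _ h1 h2
    exact absurd h2 (not_lt.mpr h1.le)

/-- Among complete multipartite graphs on `N` vertices with at most `n` partite sets,
the number of edges `∑_{i<j} c i * c j` is maximized when the vertices are distributed
as evenly as possible among `n` parts: `r = N - n·⌊N/n⌋` parts of size `⌊N/n⌋ + 1` and
`n - r` parts of size `⌊N/n⌋`, giving `(1/2)·(N² - r·(⌊N/n⌋+1)² - (n-r)·⌊N/n⌋²)` edges. -/
theorem edges_le_even_parts (n N : ℕ) (hn : 1 ≤ n) (r : ℕ) (hr : r = N - n * (N / n))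
    (c : Fin n → ℕ) (hc : ∑ i, c i = N) :
    ((∑ ij ∈ Finset.univ.filter (fun ij : Fin n × Fin n => ij.1 < ij.2),
        c ij.1 * c ij.2 : ℕ) : ℚ)
      ≤ (1/2) * ((N : ℚ)^2 - (r : ℚ) * ((N / n : ℕ) + 1 : ℚ)^2
          - ((n - r : ℕ) : ℚ) * ((N / n : ℕ) : ℚ)^2) := by
  set q : ℕ := N / n with hq
  have hdm : n * q + N % n = N := Nat.div_add_mod N n
  have hrm : r = N % n := by omega
  have hrn : r < n := by rw [hrm]; exact Nat.mod_lt _ hn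
  have hN : n * q + r = N := by omega
  -- cast the LHS
  push_cast
  have hid := sq_sum_split n (fun i => (c i : ℚ))
  have hcsum : (∑ i, (c i : ℚ)) = (N : ℚ) := by
    rw [← hc]; push_cast; rfl
  -- pointwise bound
  have hpt : ∀ i : Fin n, (2 * (q:ℚ) + 1) * (c i : ℚ) ≤ (c i : ℚ)^2 + (q:ℚ)^2 + (q:ℚ) := by
    intro i
    have : (2 * q + 1) * (c i) ≤ (c i)^2 + q^2 + q := by
      rcases le_or_gt (c i) q with h | h <;> nlinarith
    exact_mod_cast this
  have hsum : (2 * (q:ℚ) + 1) * (N : ℚ) ≤ (∑ i, (c i : ℚ)^2) + n * ((q:ℚ)^2 + (q:ℚ)) := by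
    calc (2 * (q:ℚ) + 1) * (N : ℚ) = ∑ i : Fin n, (2 * (q:ℚ) + 1) * (c i : ℚ) := by
          rw [← Finset.mul_sum, hcsum]
      _ ≤ ∑ i : Fin n, ((c i : ℚ)^2 + (q:ℚ)^2 + (q:ℚ)) := Finset.sum_le_sum fun i _ => hpt i
      _ = (∑ i, (c i : ℚ)^2) + n * ((q:ℚ)^2 + (q:ℚ)) := by
          rw [Finset.sum_add_distrib, Finset.sum_add_distrib]
          simp [Finset.card_univ, mul_comm]; ring
  have hcast : ((n - r : ℕ) : ℚ) = (n : ℚ) - (r : ℚ) := by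
    have : r ≤ n := hrn.le
    push_cast [this]; ring
  have hNq : (N : ℚ) = (n : ℚ) * (q : ℚ) + (r : ℚ) := by exact_mod_cast hN.symm
  rw [hcast]
  rw [hcsum] at hid
  nlinarith [hid, hsum, hNq]
end

section
/- Let m, n ≥ 1 and consider any outerplanar drawing of the complete multipartite graph K(p^(1), m^(n)). Let v be a vertex of the partite set of size p, and let e be the edge from v to the vertex u of the induced copy of K_{m^(n)} lying k positions counterclockwise from v around the circle (counting only vertices of K_{m^(n)}), where 1 ≤ k ≤ mn. Then the number of edges of the induced K_{m^(n)} that cross e is at least (1/2)m²n(n−1) − m(n−1) − M_L(k) − M_R(k), where M_L(k) is the number of edges of the complete multipartite graph on k−1 vertices with n parts as evenly sized as possible (r = (k−1) − n⌊(k−1)/n⌋ parts of size ⌊(k−1)/n⌋+1 and n−r parts of size ⌊(k−1)/n⌋), and M_R(k) is defined analogously with k−1 replaced by mn−k. -/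
/-- The complete multipartite graph determined by a part-assignment function:
two vertices are adjacent iff they lie in different parts. -/
def mpGraph {V I : Type*} (part : V → I) : SimpleGraph V where
  Adj u v := part u ≠ part v
  symm := ⟨fun _ _ h => Ne.symm h⟩
  loopless := ⟨fun _ h => h rfl⟩

/-- The complete multipartite graph `K(p^(1), m^(n))`: one partite set of size `p`
(the `Sum.inl` vertices) and `n` partite sets of size `m` (the `Sum.inr` vertices). -/
def K1n (p m n : ℕ) : SimpleGraph (Fin p ⊕ Fin n × Fin m) :=
  mpGraph (Sum.elim (fun _ => (none : Option (Fin n))) (fun x => some x.1))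

/-- In the outerplanar drawing given by the bijection `σ` (vertices placed on a circle
in the order given by `σ`, edges drawn as straight chords), the edges `e` and `f` cross,
with `e` containing the smallest of the four endpoint positions:  there are labellings
`e = {a,b}`, `f = {c,d}` with `σ a < σ c < σ b < σ d`, i.e. the endpoints interleave
(exactly one endpoint of `f` lies strictly between the endpoints of `e` in the cyclic
order).  A pair of edges crosses iff `crosses σ e f ∨ crosses σ f e`. -/
def crosses {V : Type*} {N : ℕ} (σ : V ≃ Fin N) (e f : Sym2 V) : Prop :=
  ∃ a b c d : V, e = s(a, b) ∧ f = s(c, d) ∧ σ a < σ c ∧ σ c < σ b ∧ σ b < σ d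

/-- The number of crossing (unordered) pairs of edges in the outerplanar drawing of `G`
given by the bijection `σ`: each crossing pair `{e, f}` is counted exactly once, via the
unique ordering for which `crosses` holds. -/
noncomputable def numCrossings {V : Type*} {N : ℕ} (σ : V ≃ Fin N) (G : SimpleGraph V) : ℕ :=
  Nat.card {ef : Sym2 V × Sym2 V //
    ef.1 ∈ G.edgeSet ∧ ef.2 ∈ G.edgeSet ∧ crosses σ ef.1 ef.2}

/-- The outerplanar crossing number `ν₁(G)`: the minimum over all outerplanar drawings
(bijections of the vertex set onto `Fin N`, `N` the number of vertices) of the number of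
crossing pairs of edges. -/
noncomputable def nu1 {V : Type*} [Fintype V] (G : SimpleGraph V) : ℕ :=
  ⨅ σ : V ≃ Fin (Fintype.card V), numCrossings σ G

/-- Part sizes of the complete multipartite graph on `N` vertices with `n` parts as
evenly sized as possible: `r = N - n·⌊N/n⌋` parts of size `⌊N/n⌋ + 1` and `n - r`
parts of size `⌊N/n⌋`. -/
def evenParts (n N : ℕ) : Fin n → ℕ :=
  fun i => if (i : ℕ) < N - n * (N / n) then N / n + 1 else N / n

/-- The number of edges of the complete multipartite graph with part sizes `c`,
namely `∑_{i<j} c i * c j`. -/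
def edgesOfParts {n : ℕ} (c : Fin n → ℕ) : ℕ :=
  ∑ ij ∈ Finset.univ.filter (fun ij : Fin n × Fin n => ij.1 < ij.2), c ij.1 * c ij.2

/-!
Let `L` and `R` be the vertices of `K_{m^(n)}` met before and after `u` when going
counterclockwise from `v`, so `|L| = k - 1` and `|R| = mn - k`. Every edge of `K_{m^(n)}`
between `L` and `R` crosses `vu`. The `m²n(n-1)/2 - m(n-1)` edges of `K_{m^(n)} - u` are those
inside `L`, those inside `R` and those between them, and the complete multipartite graph induced
on `L` has at most `M_L(k)` edges: with `n` parts of given total size, the number of edges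
`((∑ cᵢ)² - ∑ cᵢ²) / 2` is largest when the sizes are balanced. Likewise for `R`.
-/
open Finset

section EdgesOfParts

variable {n : ℕ}

lemma two_mul_edgesOfParts_add_sum_sq (c : Fin n → ℕ) :
    2 * edgesOfParts c + ∑ i, c i ^ 2 = (∑ i, c i) ^ 2 := by
  have hsplit : ∀ ij : Fin n × Fin n, c ij.1 * c ij.2 =
      ((if ij.1 < ij.2 then c ij.1 * c ij.2 else 0) + if ij.2 < ij.1 then c ij.1 * c ij.2 else 0)
        + if ij.1 = ij.2 then c ij.1 * c ij.2 else 0 := by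
    rintro ⟨i, j⟩
    rcases lt_trichotomy i j with h | rfl | h
    · simp [h, h.not_gt, h.ne]
    · simp
    · simp [h, h.not_gt, h.ne']
  have hswap : ∑ ij ∈ univ.filter (fun ij : Fin n × Fin n => ij.2 < ij.1), c ij.1 * c ij.2
      = edgesOfParts c :=
    sum_nbij' Prod.swap Prod.swap (by simp) (by simp) (by simp) (by simp)
      (fun _ _ => mul_comm _ _)
  have hdiag : ∑ ij ∈ univ.filter (fun ij : Fin n × Fin n => ij.1 = ij.2), c ij.1 * c ij.2
      = ∑ i, c i ^ 2 :=
    sum_nbij' Prod.fst (fun i => (i, i)) (by simp) (by simp) (by simp +contextual)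
      (by simp) (by simp +contextual [sq])
  rw [sq, Fintype.sum_mul_sum, ← Fintype.sum_prod_type', sum_congr rfl fun ij _ => hsplit ij,
    sum_add_distrib, sum_add_distrib, ← sum_filter, ← sum_filter, ← sum_filter, hswap, hdiag,
    edgesOfParts]
  ring

lemma edgesOfParts_add_add_sum_mul (a b : Fin n → ℕ) :
    edgesOfParts (a + b) + ∑ i, a i * b i
      = edgesOfParts a + edgesOfParts b + (∑ i, a i) * ∑ i, b i := by
  have hab := two_mul_edgesOfParts_add_sum_sq (a + b)
  have ha := two_mul_edgesOfParts_add_sum_sq a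
  have hb := two_mul_edgesOfParts_add_sum_sq b
  have hsq : ∑ i, (a + b) i ^ 2 = ∑ i, a i ^ 2 + 2 * ∑ i, a i * b i + ∑ i, b i ^ 2 := by
    simp only [Pi.add_apply, mul_sum, ← sum_add_distrib]
    exact sum_congr rfl fun i _ => by ring
  simp only [Pi.add_apply, sum_add_distrib] at hab hsq
  nlinarith

/-- `q² + (2q+1)(x-q)` is the chord of `x²` through `q` and `q + 1`. -/
lemma chord_le_sq (q x : ℤ) : q ^ 2 + (2 * q + 1) * (x - q) ≤ x ^ 2 := by
  rcases le_or_gt x q with h | h <;> nlinarith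

lemma sum_sq_le_sum_sq_of_sum_eq {ι : Type*} (s : Finset ι) (c e : ι → ℤ) (q : ℤ)
    (he : ∀ i ∈ s, e i = q ∨ e i = q + 1) (hsum : ∑ i ∈ s, e i = ∑ i ∈ s, c i) :
    ∑ i ∈ s, e i ^ 2 ≤ ∑ i ∈ s, c i ^ 2 := by
  have hchord : ∀ i ∈ s, e i ^ 2 = q ^ 2 + (2 * q + 1) * (e i - q) := by
    intro i hi
    rcases he i hi with h | h <;> rw [h] <;> ring
  calc ∑ i ∈ s, e i ^ 2 = ∑ i ∈ s, (q ^ 2 + (2 * q + 1) * (e i - q)) := sum_congr rfl hchord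
    _ = ∑ i ∈ s, (q ^ 2 + (2 * q + 1) * (c i - q)) := by
      simp only [sum_add_distrib, ← mul_sum, sum_sub_distrib, hsum]
    _ ≤ ∑ i ∈ s, c i ^ 2 := sum_le_sum fun i _ => chord_le_sq q (c i)

lemma evenParts_eq_or (N : ℕ) (i : Fin n) :
    evenParts n N i = N / n ∨ evenParts n N i = N / n + 1 := by
  unfold evenParts
  split_ifs <;> simp

lemma sum_evenParts (hn : 0 < n) (N : ℕ) : ∑ i, evenParts n N i = N := by
  have hpart : ∀ i : Fin n, evenParts n N i = N / n + if (i : ℕ) < N % n then 1 else 0 := by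
    intro i
    rw [evenParts,
      show N - n * (N / n) = N % n from Nat.sub_eq_of_eq_add' (Nat.div_add_mod N n).symm]
    split_ifs <;> rfl
  rw [sum_congr rfl fun i _ => hpart i, sum_add_distrib, sum_boole, Fin.card_filter_val_lt,
    min_eq_right (Nat.mod_lt N hn).le]
  simp [Nat.div_add_mod]

theorem edgesOfParts_le_edgesOfParts_evenParts (c : Fin n → ℕ) :
    edgesOfParts c ≤ edgesOfParts (evenParts n (∑ i, c i)) := by
  rcases Nat.eq_zero_or_pos n with rfl | hn
  · simp [edgesOfParts]
  set e := evenParts n (∑ i, c i)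
  have hsum : ∑ i, e i = ∑ i, c i := sum_evenParts hn _
  have hsq : ∑ i, (e i : ℤ) ^ 2 ≤ ∑ i, (c i : ℤ) ^ 2 :=
    sum_sq_le_sum_sq_of_sum_eq _ _ _ ((∑ i, c i) / n : ℕ)
      (fun i _ => by exact_mod_cast evenParts_eq_or _ i) (by exact_mod_cast hsum)
  have hc := two_mul_edgesOfParts_add_sum_sq c
  have he := two_mul_edgesOfParts_add_sum_sq e
  rw [hsum] at he
  have : ∑ i, e i ^ 2 ≤ ∑ i, c i ^ 2 := by exact_mod_cast hsq
  omega

end EdgesOfParts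

section PartCounts

variable {α : Type*} {n : ℕ} (part : α → Fin n)

def partCounts (s : Finset α) (i : Fin n) : ℕ := #{x ∈ s | part x = i}

lemma sum_partCounts (s : Finset α) : ∑ i, partCounts part s i = #s :=
  (card_eq_sum_card_fiberwise fun x _ => mem_univ (part x)).symm

lemma partCounts_union [DecidableEq α] {s t : Finset α} (h : Disjoint s t) :
    partCounts part (s ∪ t) = partCounts part s + partCounts part t := by
  funext i
  exact (congrArg card (filter_union _ _ _)).trans
    (card_union_of_disjoint (disjoint_filter_filter h))

lemma card_filter_ne_add_sum_partCounts_mul (s t : Finset α) :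
    #{xy ∈ s ×ˢ t | part xy.1 ≠ part xy.2} + ∑ i, partCounts part s i * partCounts part t i
      = #s * #t := by
  have hsame : #{xy ∈ s ×ˢ t | part xy.1 = part xy.2}
      = ∑ i, partCounts part s i * partCounts part t i := by
    rw [card_eq_sum_card_fiberwise (f := fun xy => part xy.1) fun _ _ => mem_univ _]
    refine sum_congr rfl fun i _ => ?_
    rw [partCounts, partCounts, ← card_product]
    congr 1
    ext ⟨x, y⟩
    simp only [mem_filter, mem_product]
    grind
  rw [← hsame, add_comm, card_filter_add_card_filter_not, card_product]

lemma edgesOfParts_partCounts_union [DecidableEq α] {s t : Finset α} (h : Disjoint s t) :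
    edgesOfParts (partCounts part (s ∪ t))
      = edgesOfParts (partCounts part s) + edgesOfParts (partCounts part t)
        + #{xy ∈ s ×ˢ t | part xy.1 ≠ part xy.2} := by
  have hadd := edgesOfParts_add_add_sum_mul (partCounts part s) (partCounts part t)
  rw [← partCounts_union part h, sum_partCounts, sum_partCounts,
    ← card_filter_ne_add_sum_partCounts_mul part s t] at hadd
  omega

end PartCounts

lemma edgesOfParts_partCounts_fst_erase {m n : ℕ} (u : Fin n × Fin m) :
    (edgesOfParts (partCounts Prod.fst (univ.erase u)) : ℚ)
      = 1 / 2 * m ^ 2 * n * (n - 1) - m * (n - 1) := by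
  have hm : 1 ≤ m := u.2.pos
  have hcount : ∀ i,
      (partCounts Prod.fst (univ.erase u) i : ℚ) = m - if u.1 = i then 1 else 0 := by
    intro i
    have hfib : #{w : Fin n × Fin m | w.1 = i} = m := by
      rw [show univ.filter (fun w : Fin n × Fin m => w.1 = i) = {i} ×ˢ univ by
        ext ⟨j, x⟩; simp [eq_comm]]
      simp
    rw [partCounts, filter_erase, card_erase_eq_ite, hfib]
    split_ifs <;> simp_all
  have hsq : ∀ i : Fin n, ((m : ℚ) - if u.1 = i then 1 else 0) ^ 2
      = m ^ 2 - if u.1 = i then 2 * (m : ℚ) - 1 else 0 := by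
    intro i
    split_ifs <;> ring
  have h := congrArg (Nat.cast : ℕ → ℚ)
    (two_mul_edgesOfParts_add_sum_sq (partCounts Prod.fst (univ.erase u)))
  push_cast [hcount, hsq, sum_sub_distrib] at h
  simp only [sum_const, card_univ, Fintype.card_fin, nsmul_eq_mul, sum_ite_eq, mem_univ,
    ↓reduceIte] at h
  linarith

section CyclicOffset

variable {V : Type*} {N : ℕ} (σ : V ≃ Fin N)

def cyclicOffset (a x : V) : ℕ := ((σ x).val + N - (σ a).val) % N

lemma cyclicOffset_eq (a x : V) :
    cyclicOffset σ a x =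
      if (σ a : ℕ) ≤ σ x then (σ x : ℕ) - σ a else (σ x : ℕ) + N - σ a := by
  have hx := (σ x).isLt
  unfold cyclicOffset
  split_ifs with h
  · rw [show (σ x : ℕ) + N - σ a = σ x - σ a + N by omega, Nat.add_mod_right,
      Nat.mod_eq_of_lt (by omega)]
  · exact Nat.mod_eq_of_lt (by omega)

lemma cyclicOffset_injective (a : V) : Function.Injective (cyclicOffset σ a) := by
  intro x y h
  have := (σ x).isLt
  have := (σ y).isLt
  simp only [cyclicOffset_eq] at h
  exact σ.injective (Fin.ext (by split_ifs at h <;> omega))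

lemma crosses_of_lt {a b c d : V} (hac : (σ a : ℕ) < σ c) (hcb : (σ c : ℕ) < σ b)
    (hbd : (σ b : ℕ) < σ d) : crosses σ s(a, b) s(c, d) :=
  ⟨a, b, c, d, rfl, rfl, hac, hcb, hbd⟩

/-- Which chord comes first in `crosses` depends on where the cyclic order `a, x, y, z` is cut
open. -/
lemma crosses_of_cyclicOffset_lt {a x y z : V} (hx : x ≠ a)
    (hxy : cyclicOffset σ a x < cyclicOffset σ a y)
    (hyz : cyclicOffset σ a y < cyclicOffset σ a z) :
    crosses σ s(a, y) s(x, z) ∨ crosses σ s(x, z) s(a, y) := by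
  have hxa : (σ x : ℕ) ≠ σ a := fun h => hx (σ.injective (Fin.ext h))
  simp only [cyclicOffset_eq] at hxy hyz
  split_ifs at hxy hyz <;>
    first
    | exact absurd hyz (by omega)
    | exact absurd hxy (by omega)
    | exact Or.inl (crosses_of_lt σ (by omega) (by omega) (by omega))
    | exact Or.inr (Sym2.eq_swap (a := a) ▸ crosses_of_lt σ (by omega) (by omega) (by omega))
    | exact Or.inr (Sym2.eq_swap (a := z) ▸ crosses_of_lt σ (by omega) (by omega) (by omega))
    | exact Or.inl (Sym2.eq_swap (a := a) ▸ Sym2.eq_swap (a := x) ▸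
        crosses_of_lt σ (by omega) (by omega) (by omega))

end CyclicOffset

section Drawing

variable {m n p : ℕ} (σ : (Fin p ⊕ Fin n × Fin m) ≃ Fin (p + n * m)) (v : Fin p)

lemma card_filter_fst_ne_le_card_crossing (u : Fin n × Fin m) {L R : Finset (Fin n × Fin m)}
    (hL : ∀ x ∈ L,
      cyclicOffset σ (Sum.inl v) (Sum.inr x) < cyclicOffset σ (Sum.inl v) (Sum.inr u))
    (hR : ∀ y ∈ R,
      cyclicOffset σ (Sum.inl v) (Sum.inr u) < cyclicOffset σ (Sum.inl v) (Sum.inr y)) :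
    #{xy ∈ L ×ˢ R | xy.1.1 ≠ xy.2.1} ≤ Nat.card {f : Sym2 (Fin p ⊕ Fin n × Fin m) //
      f ∈ (K1n p m n).edgeSet ∧ (∀ x ∈ f, x.isRight) ∧
      (crosses σ s(Sum.inl v, Sum.inr u) f ∨ crosses σ f s(Sum.inl v, Sum.inr u))} := by
  classical
  rw [Nat.card_eq_fintype_card, Fintype.card_subtype]
  refine card_le_card_of_injOn (fun xy => s(Sum.inr xy.1, Sum.inr xy.2)) ?_ ?_
  · rintro ⟨x, y⟩ hxy
    simp only [mem_coe, mem_filter, mem_product] at hxy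
    obtain ⟨⟨hx, hy⟩, hne⟩ := hxy
    rw [mem_coe, mem_filter]
    refine ⟨mem_univ _, by simpa [K1n, mpGraph] using hne, by simp,
      crosses_of_cyclicOffset_lt σ Sum.inr_ne_inl (hL x hx) (hR y hy)⟩
  · rintro ⟨x, y⟩ hxy ⟨x', y'⟩ hxy' heq
    simp only [mem_coe, mem_filter, mem_product] at hxy hxy'
    rcases Sym2.eq_iff.mp heq with ⟨hx, hy⟩ | ⟨hx, -⟩
    · exact Prod.ext (Sum.inr_injective hx) (Sum.inr_injective hy)
    · obtain rfl : x = y' := Sum.inr_injective hx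
      exact absurd (hL x hxy.1.1) (hR x hxy'.1.2).asymm

lemma edgesOfParts_partCounts_erase_le (u : Fin n × Fin m) {L R : Finset (Fin n × Fin m)}
    (hL : ∀ x ∈ L,
      cyclicOffset σ (Sum.inl v) (Sum.inr x) < cyclicOffset σ (Sum.inl v) (Sum.inr u))
    (hR : ∀ y ∈ R,
      cyclicOffset σ (Sum.inl v) (Sum.inr u) < cyclicOffset σ (Sum.inl v) (Sum.inr y))
    (hLR : L ∪ R = univ.erase u) :
    edgesOfParts (partCounts Prod.fst (univ.erase u))
      ≤ edgesOfParts (partCounts Prod.fst L) + edgesOfParts (partCounts Prod.fst R)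
        + Nat.card {f : Sym2 (Fin p ⊕ Fin n × Fin m) //
          f ∈ (K1n p m n).edgeSet ∧ (∀ x ∈ f, x.isRight) ∧
          (crosses σ s(Sum.inl v, Sum.inr u) f ∨ crosses σ f s(Sum.inl v, Sum.inr u))} := by
  have hdisj : Disjoint L R :=
    disjoint_left.mpr fun x hxL hxR => (hL x hxL).not_gt (hR x hxR)
  rw [← hLR, edgesOfParts_partCounts_union _ hdisj]
  exact Nat.add_le_add_left (card_filter_fst_ne_le_card_crossing σ v u hL hR) _

end Drawing

theorem edge_crossing_lower_bound_general (m n p k : ℕ)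
    (σ : (Fin p ⊕ Fin n × Fin m) ≃ Fin (p + n * m)) (v : Fin p) (u : Fin n × Fin m)
    (hu : Nat.card {w : Fin n × Fin m //
        ((σ (Sum.inr w)).val + (p + n * m) - (σ (Sum.inl v)).val) % (p + n * m)
          ≤ ((σ (Sum.inr u)).val + (p + n * m) - (σ (Sum.inl v)).val) % (p + n * m)} = k) :
    (1/2) * (m : ℚ)^2 * n * ((n : ℚ) - 1) - (m : ℚ) * ((n : ℚ) - 1)
        - (edgesOfParts (evenParts n (k - 1)) : ℚ)
        - (edgesOfParts (evenParts n (m * n - k)) : ℚ)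
      ≤ (Nat.card {f : Sym2 (Fin p ⊕ Fin n × Fin m) //
          f ∈ (K1n p m n).edgeSet ∧ (∀ x ∈ f, x.isRight) ∧
          (crosses σ s(Sum.inl v, Sum.inr u) f ∨ crosses σ f s(Sum.inl v, Sum.inr u))} : ℚ) := by
  classical
  set off := fun w : Fin n × Fin m => cyclicOffset σ (Sum.inl v) (Sum.inr w)
  set S := univ.filter fun w => off w ≤ off u
  have hS : #S = k := by rwa [Nat.card_eq_fintype_card, Fintype.card_subtype] at hu
  have huS : u ∈ S := mem_filter.mpr ⟨mem_univ u, le_rfl⟩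
  have hL : ∀ x ∈ S.erase u, off x < off u := fun x hx =>
    (mem_filter.mp (mem_of_mem_erase hx)).2.lt_of_ne
      ((cyclicOffset_injective σ _).ne (Sum.inr_injective.ne (ne_of_mem_erase hx)))
  have hR : ∀ y ∈ Sᶜ, off u < off y := fun y hy =>
    not_le.mp fun h => mem_compl.mp hy (by simp [S, h])
  have hLR : S.erase u ∪ Sᶜ = univ.erase u := by
    ext w
    by_cases hw : w ∈ S <;> by_cases hwu : w = u <;> simp_all
  have hcardL : ∑ i, partCounts Prod.fst (S.erase u) i = k - 1 := by
    rw [sum_partCounts, card_erase_of_mem huS, hS]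
  have hcardR : ∑ i, partCounts Prod.fst Sᶜ i = m * n - k := by
    rw [sum_partCounts, card_compl, hS, Fintype.card_prod, Fintype.card_fin, Fintype.card_fin,
      mul_comm]
  have hTuranL := edgesOfParts_le_edgesOfParts_evenParts (partCounts Prod.fst (S.erase u))
  have hTuranR := edgesOfParts_le_edgesOfParts_evenParts (partCounts Prod.fst Sᶜ)
  rw [hcardL] at hTuranL
  rw [hcardR] at hTuranR
  have key := (edgesOfParts_partCounts_erase_le σ v u hL hR hLR).trans
    (Nat.add_le_add_right (Nat.add_le_add hTuranL hTuranR) _)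
  rw [← edgesOfParts_partCounts_fst_erase u]
  have := (Nat.cast_le (α := ℚ)).mpr key
  push_cast at this
  linarith

/-- In any outerplanar drawing `σ` of `K(p^(1), m^(n))` (`m, n ≥ 1`), let `v` be a vertex
of the partite set of size `p` and let `u` be the vertex of the induced copy of `K_{m^(n)}`
lying `k` positions counterclockwise around the circle from `v`, counting only vertices of
`K_{m^(n)}` (`1 ≤ k ≤ mn`); this is expressed by the hypothesis `hu`, which says that
exactly `k` vertices `w` of `K_{m^(n)}` have counterclockwise offset from `v` at most that
of `u`.  Then the number of edges of the induced `K_{m^(n)}` crossing the edge `e = vu` is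
at least `(1/2)m²n(n-1) - m(n-1) - M_L(k) - M_R(k)`, where `M_L(k)` (resp. `M_R(k)`) is the
number of edges of the complete multipartite graph on `k-1` (resp. `mn-k`) vertices with
`n` parts as evenly sized as possible. -/
theorem edge_crossing_lower_bound (m n p k : ℕ) (hm : 1 ≤ m) (hn : 1 ≤ n)
    (hk : 1 ≤ k) (hk' : k ≤ m * n)
    (σ : (Fin p ⊕ Fin n × Fin m) ≃ Fin (p + n * m)) (v : Fin p) (u : Fin n × Fin m)
    (hu : Nat.card {w : Fin n × Fin m //
        ((σ (Sum.inr w)).val + (p + n * m) - (σ (Sum.inl v)).val) % (p + n * m)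
          ≤ ((σ (Sum.inr u)).val + (p + n * m) - (σ (Sum.inl v)).val) % (p + n * m)} = k) :
    (1/2) * (m : ℚ)^2 * n * ((n : ℚ) - 1) - (m : ℚ) * ((n : ℚ) - 1)
        - (edgesOfParts (evenParts n (k - 1)) : ℚ)
        - (edgesOfParts (evenParts n (m * n - k)) : ℚ)
      ≤ (Nat.card {f : Sym2 (Fin p ⊕ Fin n × Fin m) //
          f ∈ (K1n p m n).edgeSet ∧ (∀ x ∈ f, x.isRight) ∧
          (crosses σ s(Sum.inl v, Sum.inr u) f ∨ crosses σ f s(Sum.inl v, Sum.inr u))} : ℚ) :=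
  edge_crossing_lower_bound_general m n p k σ v u hu
end
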